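/- arXiv:2504.17369 — 3 statements merged into one kernel-verified Lean document; each statement's English description precedes it below -/
import Mathlib

section
/- Let A be a commutative ring, u ∈ A, and h ∈ A. Then the localization of the quotient ring A[w]/(u·w − h) at the image of u is isomorphic as an A-algebra to the localization A[u⁻¹] of A at u, via the map sending w to h·u⁻¹. -/
/-!
Inverting `u` in `A[w]/(u·w − h)` makes `w = h/u` redundant. The map `A[w]/(u·w − h) → A[u⁻¹]`,
`w ↦ h·u⁻¹`, extends to the localization at `u`, and the structure map of that localization
extends to `A[u⁻¹]`. The composite on `A[u⁻¹]` is the identity by the universal property of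
localization; the other composite fixes `w` because `u·(h·u⁻¹) = h = u·w` and `u` is a unit there.
-/

open Polynomial

theorem IsLocalization.Away.algebraMap_mul_mul_invSelf {A S : Type*} [CommRing A] [CommRing S]
    [Algebra A S] (u h : A) [IsLocalization.Away u S] :
    algebraMap A S u * (algebraMap A S h * invSelf u) = algebraMap A S h := by
  rw [mul_left_comm, mul_invSelf, mul_one]

theorem IsLocalization.Away.isUnit_algebraMap_of_isScalarTower {A B L : Type*} [CommRing A]
    [CommRing B] [CommRing L] [Algebra A B] [Algebra B L] [Algebra A L] [IsScalarTower A B L]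
    (u : A) [IsLocalization.Away (algebraMap A B u) L] : IsUnit (algebraMap A L u) := by
  rw [IsScalarTower.algebraMap_apply A B L]
  exact IsLocalization.map_units L ⟨_, Submonoid.mem_powers _⟩

section

variable {A : Type*} [CommRing A] (u h : A)

theorem mk_C_mul_mk_X :
    Ideal.Quotient.mk (Ideal.span {C u * X - C h}) (C u) *
        Ideal.Quotient.mk (Ideal.span {C u * X - C h}) X =
      Ideal.Quotient.mk (Ideal.span {C u * X - C h}) (C h) := by
  rw [← map_mul, Ideal.Quotient.mk_eq_mk_iff_sub_mem]
  exact Ideal.subset_span rfl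

variable (S : Type*) [CommRing S] [Algebra A S] [IsLocalization.Away u S]

noncomputable def quotientToAway : A[X] ⧸ Ideal.span {C u * X - C h} →ₐ[A] S :=
  Ideal.Quotient.liftₐ _ (aeval (algebraMap A S h * IsLocalization.Away.invSelf u)) fun p hp => by
    obtain ⟨q, rfl⟩ := Ideal.mem_span_singleton'.mp hp
    simp only [map_mul, map_sub, aeval_C, aeval_X,
      IsLocalization.Away.algebraMap_mul_mul_invSelf, sub_self, mul_zero]

@[simp]
theorem quotientToAway_mk (p : A[X]) :
    quotientToAway u h S (Ideal.Quotient.mk (Ideal.span {C u * X - C h}) p) =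
      aeval (algebraMap A S h * IsLocalization.Away.invSelf u) p :=
  rfl

variable (L : Type*) [CommRing L] [Algebra (A[X] ⧸ Ideal.span {C u * X - C h}) L]
  [IsLocalization.Away (Ideal.Quotient.mk (Ideal.span {C u * X - C h}) (C u)) L]
  [Algebra A L] [IsScalarTower A (A[X] ⧸ Ideal.span {C u * X - C h}) L]

noncomputable def awayQuotientToAway : L →ₐ[A] S :=
  IsLocalization.Away.liftAlgHom (Ideal.Quotient.mk (Ideal.span {C u * X - C h}) (C u))
      (f := quotientToAway u h S) <| by
    rw [quotientToAway_mk, aeval_C]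
    exact IsLocalization.map_units S ⟨u, Submonoid.mem_powers u⟩

theorem awayQuotientToAway_algebraMap_mk_X :
    awayQuotientToAway u h S L
        (algebraMap _ L (Ideal.Quotient.mk (Ideal.span {C u * X - C h}) X)) =
      algebraMap A S h * IsLocalization.Away.invSelf u := by
  simp [awayQuotientToAway]

noncomputable def awayToAwayQuotient : S →ₐ[A] L :=
  IsLocalization.Away.liftAlgHom u (f := Algebra.ofId A L) <|
    IsLocalization.Away.isUnit_algebraMap_of_isScalarTower
      (B := A[X] ⧸ Ideal.span {C u * X - C h}) u

theorem awayToAwayQuotient_comp_awayQuotientToAway :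
    (awayToAwayQuotient u h S L).comp (awayQuotientToAway u h S L) = AlgHom.id A L := by
  apply IsLocalization.algHom_ext
    (Submonoid.powers (Ideal.Quotient.mk (Ideal.span {C u * X - C h}) (C u)))
  apply Ideal.Quotient.algHom_ext
  apply Polynomial.algHom_ext
  have hu : IsUnit (algebraMap A L u) :=
    IsLocalization.Away.isUnit_algebraMap_of_isScalarTower
      (B := A[X] ⧸ Ideal.span {C u * X - C h}) u
  refine hu.mul_left_cancel ?_
  change algebraMap A L u * awayToAwayQuotient u h S L (awayQuotientToAway u h S L
    (algebraMap _ L (Ideal.Quotient.mk (Ideal.span {C u * X - C h}) X))) = _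
  rw [awayQuotientToAway_algebraMap_mk_X]
  calc algebraMap A L u * awayToAwayQuotient u h S L
        (algebraMap A S h * IsLocalization.Away.invSelf u)
      = awayToAwayQuotient u h S L (algebraMap A S h) := by
        rw [← AlgHom.commutes (awayToAwayQuotient u h S L), ← map_mul,
          IsLocalization.Away.algebraMap_mul_mul_invSelf]
    _ = algebraMap A L u * algebraMap _ L (Ideal.Quotient.mk (Ideal.span {C u * X - C h}) X) := by
        rw [AlgHom.commutes,
          IsScalarTower.algebraMap_apply A (A[X] ⧸ Ideal.span {C u * X - C h}) L h,
          IsScalarTower.algebraMap_apply A (A[X] ⧸ Ideal.span {C u * X - C h}) L u, ← map_mul]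
        exact congrArg _ (mk_C_mul_mk_X u h).symm

noncomputable def awayQuotientEquivAway : L ≃ₐ[A] S :=
  AlgEquiv.ofAlgHom (awayQuotientToAway u h S L) (awayToAwayQuotient u h S L)
    ((IsLocalization.algHom_subsingleton (Submonoid.powers u)).elim _ _)
    (awayToAwayQuotient_comp_awayQuotientToAway u h S L)

end

/-- For a commutative ring `A` and `u h ∈ A`, the localization of `A[w]/(u·w − h)` at the
image of `u` is isomorphic, as an `A`-algebra, to the localization `A[u⁻¹]`, via a map
sending (the image of) `w` to `h·u⁻¹`. -/
theorem stmt_2 (A : Type*) [CommRing A] (u h : A) :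
    ∃ e : Localization.Away
        ((Ideal.Quotient.mk (Ideal.span {C u * Polynomial.X - C h})) (C u)) ≃ₐ[A]
        Localization.Away u,
      e (algebraMap _ _ ((Ideal.Quotient.mk (Ideal.span {C u * Polynomial.X - C h}))
          Polynomial.X))
        = algebraMap A _ h * IsLocalization.Away.invSelf u :=
  ⟨awayQuotientEquivAway u h _ _, awayQuotientToAway_algebraMap_mk_X u h _ _⟩
end

section
/- Let K be a field of characteristic zero. The quotient ring K[x,z,w]/(x² + 4z³ + w⁶) is an integral domain. -/
/-!
Over the UFD `A = K[z, w]`, the polynomial `x² + c` with `c = 4z³ + w⁶` is monic quadratic in `x`,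
so it factors only as `(x + a)(x - a)`, i.e. only if `-c` is a square in `A`. But `-c` has odd
degree `3` in `z`, and degrees in a variable add under multiplication over a domain, so it is not
a square. Hence `x² + c` is irreducible, so prime in the UFD `A[x]`, and the quotient is a domain.
-/

open MvPolynomial

namespace Polynomial

theorem irreducible_X_pow_two_add_C {R : Type*} [CommRing R] [IsDomain R] {c : R}
    (hc : ¬IsSquare (-c)) : Irreducible (X ^ 2 + C c) := by
  have hmonic : (X ^ 2 + C c).Monic := monic_X_pow_add_C c two_ne_zero
  have hdeg : (X ^ 2 + C c).natDegree = 2 := natDegree_X_pow_add_C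
  by_contra h
  obtain ⟨c₁, c₂, hmul, hadd⟩ := (hmonic.not_irreducible_iff_exists_add_mul_eq_coeff hdeg).mp h
  simp only [coeff_add, coeff_X_pow, coeff_C] at hmul hadd
  norm_num at hmul hadd
  exact hc ⟨c₁, by linear_combination -hmul + c₁ * hadd⟩

end Polynomial

namespace MvPolynomial

theorem not_isSquare_of_odd_degreeOf {R σ : Type*} [CommSemiring R] [NoZeroDivisors R]
    {p : MvPolynomial σ R} (i : σ) (hp : Odd (degreeOf i p)) : ¬IsSquare p := by
  rintro ⟨q, rfl⟩
  have hq : q ≠ 0 := by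
    rintro rfl
    simp at hp
  rw [degreeOf_mul_eq hq hq] at hp
  exact Nat.not_odd_iff_even.mpr ⟨_, rfl⟩ hp

theorem finSuccEquiv_rename_succ {R : Type*} [CommSemiring R] {n : ℕ}
    (p : MvPolynomial (Fin n) R) : finSuccEquiv R n (rename Fin.succ p) = Polynomial.C p := by
  induction p using MvPolynomial.induction_on with
  | C a => simp [finSuccEquiv_apply]
  | add p q hp hq => simp [hp, hq]
  | mul_X p i hp => simp [hp, finSuccEquiv_X_succ]

theorem prime_X_zero_pow_two_add_rename_succ {R : Type*} [CommRing R] [IsDomain R]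
    [UniqueFactorizationMonoid R] {n : ℕ} {c : MvPolynomial (Fin n) R} (hc : ¬IsSquare (-c)) :
    Prime (X 0 ^ 2 + rename Fin.succ c) := by
  rw [← MulEquiv.prime_iff (finSuccEquiv R n), ← UniqueFactorizationMonoid.irreducible_iff_prime]
  simpa [finSuccEquiv_X_zero, finSuccEquiv_rename_succ] using
    Polynomial.irreducible_X_pow_two_add_C hc

end MvPolynomial

/-- Over a field of characteristic zero, `K[x,z,w]/(x² + 4z³ + w⁶)` is an integral domain. -/
theorem stmt_4 (K : Type*) [Field K] [CharZero K] :
    IsDomain (MvPolynomial (Fin 3) K ⧸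
      Ideal.span {((X 0) ^ 2 + 4 * (X 1) ^ 3 + (X 2) ^ 6 : MvPolynomial (Fin 3) K)}) := by
  set c : MvPolynomial (Fin 2) K := 4 * X 0 ^ 3 + X 1 ^ 6
  have hdeg : degreeOf 0 c = 3 := by
    have h : finSuccEquiv K 1 c = Polynomial.C 4 * Polynomial.X ^ 3 + Polynomial.C (X 0 ^ 6) := by
      simp [c, finSuccEquiv_X_zero, ← finSuccEquiv_X_succ, map_ofNat]
    rw [← natDegree_finSuccEquiv, h]
    compute_degree!
  have hodd : Odd (degreeOf 0 (-c)) := by rw [degreeOf_neg, hdeg]; decide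
  have hprime := prime_X_zero_pow_two_add_rename_succ (not_isSquare_of_odd_degreeOf 0 hodd)
  have hc : rename Fin.succ c = 4 * X 1 ^ 3 + X 2 ^ 6 := by simp [c, map_ofNat]
  rw [hc, ← add_assoc] at hprime
  rw [Ideal.Quotient.isDomain_iff_prime, Ideal.span_singleton_prime hprime.ne_zero]
  exact hprime
end

section
/- Let K be a field of characteristic zero. The quotient ring R = K[x,y,z,w₁,w₂]/(x² − y²z + 4z³ + y²w₁ + w₂⁶) is an integral domain. -/
/-!
Read `f` as a monic quadratic `x² - a` in `x` over `A = K[y, z, w₁, w₂]`, where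
`a = y²z - 4z³ - y²w₁ - w₂⁶`. A monic quadratic over a domain is irreducible as soon as it has
no root, i.e. as soon as `a` is not a square in `A`; and `a` is not a square because the
specialization `(y, z, w₁, w₂) ↦ (1, 0, t, 0)` sends it to `-t`, of odd degree. Since
`K[x, y, z, w₁, w₂]` is a UFD, the irreducible `f` is prime and the quotient is a domain.
-/

namespace Polynomial

variable {R : Type*} [CommRing R] [IsDomain R]

theorem not_isSquare_of_odd_natDegree {p : R[X]} (hp : Odd p.natDegree) : ¬IsSquare p := by
  rintro ⟨q, rfl⟩
  rw [← sq, natDegree_pow] at hp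
  exact Nat.not_odd_iff_even.mpr (even_two_mul _) hp

theorem irreducible_X_pow_two_sub_C {a : R} (ha : ¬IsSquare a) :
    Irreducible (X ^ 2 - C a : R[X]) := by
  have hmonic : (X ^ 2 - C a : R[X]).Monic := monic_X_pow_sub_C a two_ne_zero
  rw [hmonic.irreducible_iff_roots_eq_zero_of_degree_le_three (by simp) (by simp)]
  refine Multiset.eq_zero_of_forall_notMem fun b hb => ha ⟨b, ?_⟩
  rw [mem_roots hmonic.ne_zero, IsRoot.def, eval_sub, eval_pow, eval_X, eval_C,
    sub_eq_zero] at hb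
  rw [← hb, sq]

end Polynomial

open MvPolynomial

section

variable (K : Type*) [Field K]

noncomputable def radicand : MvPolynomial (Fin 4) K :=
  X 0 ^ 2 * X 1 - 4 * X 1 ^ 3 - X 0 ^ 2 * X 2 - X 3 ^ 6

theorem not_isSquare_radicand : ¬IsSquare (radicand K) := by
  let specialization : MvPolynomial (Fin 4) K →ₐ[K] Polynomial K :=
    aeval ![1, 0, Polynomial.X, 0]
  have hspecialization : specialization (radicand K) = -Polynomial.X := by
    simp [specialization, radicand]
  intro hsquare
  refine Polynomial.not_isSquare_of_odd_natDegree ?_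
    (hspecialization ▸ hsquare.map specialization)
  simp

theorem finSuccEquiv_eq_X_pow_two_sub_C_radicand :
    finSuccEquiv K 4 (X 0 ^ 2 - X 1 ^ 2 * X 2 + 4 * X 2 ^ 3 + X 1 ^ 2 * X 3 + X 4 ^ 6) =
      Polynomial.X ^ 2 - Polynomial.C (radicand K) := by
  have h1 : (X 1 : MvPolynomial (Fin 5) K) = X (Fin.succ 0) := rfl
  have h2 : (X 2 : MvPolynomial (Fin 5) K) = X (Fin.succ 1) := rfl
  have h3 : (X 3 : MvPolynomial (Fin 5) K) = X (Fin.succ 2) := rfl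
  have h4 : (X 4 : MvPolynomial (Fin 5) K) = X (Fin.succ 3) := rfl
  rw [h1, h2, h3, h4]
  simp only [map_add, map_sub, map_mul, map_pow, map_ofNat, finSuccEquiv_X_zero,
    finSuccEquiv_X_succ, radicand]
  ring

end

theorem stmt_6_general (K : Type*) [Field K] :
    IsDomain (MvPolynomial (Fin 5) K ⧸
      Ideal.span {((X 0) ^ 2 - (X 1) ^ 2 * X 2 + 4 * (X 2) ^ 3
        + (X 1) ^ 2 * X 3 + (X 4) ^ 6 : MvPolynomial (Fin 5) K)}) := by
  have hirreducible : Irreducible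
      ((X 0) ^ 2 - (X 1) ^ 2 * X 2 + 4 * (X 2) ^ 3 + (X 1) ^ 2 * X 3 + (X 4) ^ 6 :
        MvPolynomial (Fin 5) K) := by
    rw [← MulEquiv.irreducible_iff (finSuccEquiv K 4), finSuccEquiv_eq_X_pow_two_sub_C_radicand]
    exact Polynomial.irreducible_X_pow_two_sub_C (not_isSquare_radicand K)
  have := Ideal.isPrime_span_singleton_of_prime hirreducible.prime
  infer_instance

/-- Over a field of characteristic zero,
`K[x,y,z,w₁,w₂]/(x² − y²z + 4z³ + y²w₁ + w₂⁶)` is an integral domain. -/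
theorem stmt_6 (K : Type*) [Field K] [CharZero K] :
    IsDomain (MvPolynomial (Fin 5) K ⧸
      Ideal.span {((X 0) ^ 2 - (X 1) ^ 2 * X 2 + 4 * (X 2) ^ 3
        + (X 1) ^ 2 * X 3 + (X 4) ^ 6 : MvPolynomial (Fin 5) K)}) :=
  stmt_6_general K
end
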